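/- arXiv:1709.00582 — 2 statements merged into one kernel-verified Lean document; each statement's English description precedes it below -/
import Mathlib

section
/- Lower bound for FK probabilities under a magnetic field (finite-graph version of Lemma 4.1, with the normalization made explicit): for every h ≥ 0, taking constant external field H ≡ h, and every event A ⊆ {0,1}^E, P̃_{J,h}(A) ≥ P̃_{J,0}(A) / E_{P_{J,0}}[ exp( h · ∑_{v∈V} σ_v ) ]. -/
open scoped Classical

namespace FK

variable {V : Type*} [Fintype V] [DecidableEq V]

/-- Internal bond configurations on the edge set `E`. -/
abbrev Config (E : Finset (Sym2 V)) : Type _ := {e : Sym2 V // e ∈ E} → Bool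

/-- Full bond configurations: internal edges together with the ghost edges
(one for each vertex). -/
abbrev GConfig (E : Finset (Sym2 V)) : Type _ := Config E × (V → Bool)

/-- Two vertices are adjacent if they are distinct and joined by an open internal edge. -/
def adj (E : Finset (Sym2 V)) (ω : Config E) (u v : V) : Prop :=
  u ≠ v ∧ ∃ h : s(u, v) ∈ E, ω ⟨s(u, v), h⟩ = true

/-- The same-cluster relation of an internal configuration. -/
def conn (E : Finset (Sym2 V)) (ω : Config E) (u v : V) : Prop :=
  Relation.ReflTransGen (adj E ω) u v

/-- The cluster of a vertex. -/
noncomputable def cluster (E : Finset (Sym2 V)) (ω : Config E) (v : V) : Finset V :=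
  Finset.univ.filter (fun u => conn E ω v u)

/-- The set of clusters (connected components) of an internal configuration. -/
noncomputable def clusters (E : Finset (Sym2 V)) (ω : Config E) : Finset (Finset V) :=
  Finset.univ.image (cluster E ω)

/-- Adjacency in the extended graph, where `none` is the ghost vertex `g`. -/
def adjG (E : Finset (Sym2 V)) (ω : GConfig E) : Option V → Option V → Prop
  | some u, some v => adj E ω.1 u v
  | some u, none => ω.2 u = true
  | none, some v => ω.2 v = true
  | none, none => False

/-- Connectivity in the extended graph (with the ghost vertex `none`). -/
def connG (E : Finset (Sym2 V)) (ω : GConfig E) (x y : Option V) : Prop :=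
  Relation.ReflTransGen (adjG E ω) x y

/-- Number of connected components of the extended graph not containing the ghost. -/
noncomputable def kGhost (E : Finset (Sym2 V)) (ω : GConfig E) : ℕ :=
  (((Finset.univ : Finset V).filter (fun v => ¬ connG E ω (some v) none)).image
    (fun v => Finset.univ.filter (fun u : V => connG E ω (some v) (some u)))).card

/-- The product over internal edges of the usual FK edge weights. -/
noncomputable def edgeWeight (J : Sym2 V → ℝ) (E : Finset (Sym2 V)) (ω : Config E) : ℝ :=
  ∏ e : {e : Sym2 V // e ∈ E},
    if ω e then 1 - Real.exp (-2 * J e.1) else Real.exp (-2 * J e.1)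

/-- Unnormalized FK (q = 2) weight with ghost. -/
noncomputable def fkWeight (J : Sym2 V → ℝ) (H : V → ℝ) (E : Finset (Sym2 V))
    (ω : GConfig E) : ℝ :=
  2 ^ kGhost E ω * edgeWeight J E ω.1 *
    ∏ v, if ω.2 v then 1 - Real.exp (-2 * H v) else Real.exp (-2 * H v)

/-- The FK (q = 2) random-cluster measure with ghost. -/
noncomputable def fkProb (J : Sym2 V → ℝ) (H : V → ℝ) (E : Finset (Sym2 V))
    (ω : GConfig E) : ℝ :=
  fkWeight J H E ω / ∑ ω' : GConfig E, fkWeight J H E ω'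

/-- The marginal of the FK measure with ghost on the internal edges. -/
noncomputable def fkMarginal (J : Sym2 V → ℝ) (H : V → ℝ) (E : Finset (Sym2 V))
    (ωi : Config E) : ℝ :=
  ∑ ωg : V → Bool, fkProb J H E (ωi, ωg)

/-- Unnormalized zero-field random-cluster (q = 2) weight. -/
noncomputable def rcWeight (J : Sym2 V → ℝ) (E : Finset (Sym2 V)) (ω : Config E) : ℝ :=
  2 ^ (clusters E ω).card * edgeWeight J E ω

/-- The zero-field random-cluster (q = 2) measure. -/
noncomputable def rcProb (J : Sym2 V → ℝ) (E : Finset (Sym2 V)) (ω : Config E) : ℝ :=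
  rcWeight J E ω / ∑ ω' : Config E, rcWeight J E ω'

/-- The spin value (±1) of a Boolean. -/
def spin (b : Bool) : ℝ := if b then 1 else -1

/-- The product of the two spins at the endpoints of an (unordered) edge. -/
def pairSpin (σ : V → Bool) : Sym2 V → ℝ :=
  Sym2.lift ⟨fun u v => spin (σ u) * spin (σ v), fun u v => mul_comm _ _⟩

/-- Unnormalized Ising weight. -/
noncomputable def isingWeight (J : Sym2 V → ℝ) (H : V → ℝ) (E : Finset (Sym2 V))
    (σ : V → Bool) : ℝ :=
  Real.exp ((∑ e ∈ E, J e * pairSpin σ e) + ∑ v, H v * spin (σ v))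

/-- The Ising Gibbs measure. -/
noncomputable def isingProb (J : Sym2 V → ℝ) (H : V → ℝ) (E : Finset (Sym2 V))
    (σ : V → Bool) : ℝ :=
  isingWeight J H E σ / ∑ σ' : V → Bool, isingWeight J H E σ'

/-- Unnormalized Edwards–Sokal weight on pairs (spin configuration, bond configuration
with ghost); the ghost spin is `+1` (i.e. `true`). -/
noncomputable def esWeight (J : Sym2 V → ℝ) (H : V → ℝ) (E : Finset (Sym2 V))
    (p : (V → Bool) × GConfig E) : ℝ :=
  (∏ e : {e : Sym2 V // e ∈ E},
      if p.2.1 e then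
        (if ∀ u ∈ e.1, ∀ v ∈ e.1, p.1 u = p.1 v then 1 - Real.exp (-2 * J e.1) else 0)
      else Real.exp (-2 * J e.1))
  * ∏ v, if p.2.2 v then (if p.1 v = true then 1 - Real.exp (-2 * H v) else 0)
         else Real.exp (-2 * H v)

/-- The Edwards–Sokal coupling measure. -/
noncomputable def esProb (J : Sym2 V → ℝ) (H : V → ℝ) (E : Finset (Sym2 V))
    (p : (V → Bool) × GConfig E) : ℝ :=
  esWeight J H E p / ∑ p' : (V → Bool) × GConfig E, esWeight J H E p'

end FK

/-!
Sum out the spins in the Edwards–Sokal coupling. Both measures on `{0,1}^E` then have weights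
proportional to `c_H(ω) = w_J(ω) · ∑_σ exp (∑_v H_v σ_v)`, where `w_J` is the product of the edge
weights and `σ` runs over the spin configurations constant on the clusters of `ω`. For `H = 0`
there are `2^{k(ω)}` such `σ`, which gives the zero-field random-cluster measure. For general `H`,
summing out the ghost edges gives the edge marginal of the ghost measure: `2^{k(ω, ω_g)}` counts the
`σ` that equal `+1` on every vertex joined to the ghost. The Ising expectation in the statement is
`Z_h / Z_0 = ∑ c_h / ∑ c_0`, so the claim reduces to `c_0 ≤ c_h` pointwise. This holds because
flipping all spins preserves compatibility, which turns `∑_σ exp (h ∑_v σ_v)` into a sum of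
`cosh`s, each at least `1`.
-/

namespace FK

open Finset

section Counting

variable {ι : Type*} [Fintype ι] [DecidableEq ι]

theorem card_fiberwiseConst_ge_eq_two_pow {β : Type*} [DecidableEq β] (c : ι → β)
    (τ : ι → Bool) :
    #{σ : ι → Bool | (∀ u v, c u = c v → σ u = σ v) ∧ τ ≤ σ}
      = 2 ^ #((univ.filter fun v => ∀ u, c u = c v → τ u = false).image c) := by
  set S := (univ.filter fun v => ∀ u, c u = c v → τ u = false).image c
  have hrep (b : S) := (mem_image.1 b.2).choose_spec
  set rep : S → ι := fun b => (mem_image.1 b.2).choose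
  rw [← Fintype.card_coe S, ← Fintype.card_bool, ← Fintype.card_fun, ← card_univ]
  refine card_bij' (fun σ _ b => σ (rep b))
    (fun f _ v => if hv : c v ∈ S then f ⟨c v, hv⟩ else true)
    (fun _ _ => mem_univ _) (fun f _ => ?_) (fun σ hσ => ?_) (fun f _ => ?_)
  · simp only [mem_filter, mem_univ, true_and]
    refine ⟨fun u v huv => by simp only [huv], fun v => ?_⟩
    dsimp only
    split_ifs with hv
    · obtain ⟨w, hw, hwv⟩ := mem_image.1 hv
      simp [(mem_filter.1 hw).2 v hwv.symm]
    · exact le_top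
  · obtain ⟨hσc, hστ⟩ := (mem_filter.1 hσ).2
    funext v
    split_ifs with hv
    · exact hσc _ _ (hrep ⟨c v, hv⟩).2
    · obtain ⟨u, huv, hu⟩ : ∃ u, c u = c v ∧ τ u = true := by
        by_contra! hfree
        exact hv (mem_image_of_mem c (by simpa using hfree))
      exact (hσc u v huv ▸ Bool.le_iff_imp.1 (hστ u) hu).symm
  · funext b
    have hb : c (rep b) = b := (hrep b).2
    simp only [hb, b.2, dite_true]

theorem sum_le_prod_ite (σ : ι → Bool) (q : ι → ℝ) :
    ∑ τ with τ ≤ σ, ∏ i, (if τ i then 1 - q i else q i) = ∏ i, if σ i then 1 else q i := by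
  have hbox : ({τ | τ ≤ σ} : Finset (ι → Bool)) = Fintype.piFinset fun i => {b | b ≤ σ i} := by
    ext τ
    simp [Pi.le_def]
  rw [hbox]
  refine (prod_univ_sum _ fun i (b : Bool) => if b then 1 - q i else q i).symm.trans
    (prod_congr rfl fun i _ => ?_)
  cases σ i <;> simp [filter_insert, filter_singleton, Bool.le_iff_imp]

end Counting

theorem spin_not (b : Bool) : spin (!b) = -spin b := by
  cases b <;> simp [spin]

theorem exp_sum_mul_spin {ι : Type*} [Fintype ι] (H : ι → ℝ) (σ : ι → Bool) :
    Real.exp (∑ i, H i * spin (σ i))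
      = Real.exp (∑ i, H i) * ∏ i, if σ i then 1 else Real.exp (-2 * H i) := by
  have hfactor (i : ι) :
      (if σ i then 1 else Real.exp (-2 * H i)) = Real.exp (H i * spin (σ i) - H i) := by
    cases σ i
    · simp only [spin, Bool.false_eq_true, if_false]
      ring_nf
    · simp [spin]
  simp only [hfactor, ← Real.exp_sum, ← Real.exp_add, sum_sub_distrib]
  ring_nf

section Graph

variable {V : Type*} {E : Finset (Sym2 V)}

instance (ω : Config E) : Std.Symm (adj E ω) where
  symm _ _ := fun ⟨hne, he, hω⟩ => ⟨hne.symm, Sym2.eq_swap ▸ he, by simpa [Sym2.eq_swap] using hω⟩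

theorem conn_comm {ω : Config E} {u v : V} : conn E ω u v ↔ conn E ω v u :=
  Std.Symm.iff (r := Relation.ReflTransGen (adj E ω)) u v

theorem cluster_eq_cluster_iff [Fintype V] {ω : Config E} {u v : V} :
    cluster E ω u = cluster E ω v ↔ conn E ω u v := by
  refine ⟨fun huv => ?_, fun huv => ?_⟩
  · have : v ∈ cluster E ω u := huv ▸ mem_filter.2 ⟨mem_univ _, .refl⟩
    exact (mem_filter.1 this).2
  · ext w
    simp only [cluster, mem_filter, mem_univ, true_and]
    exact ⟨(conn_comm.1 huv).trans, huv.trans⟩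

theorem connG_of_conn {ω : GConfig E} {u v : V} (h : conn E ω.1 u v) :
    connG E ω (some u) (some v) := by
  induction h with
  | refl => exact .refl
  | tail _ huv ih => exact ih.tail huv

theorem connG_some_cases {ω : GConfig E} {v : V} {z : Option V} (h : connG E ω (some v) z) :
    (∃ u, conn E ω.1 v u ∧ z = some u) ∨ ∃ w, conn E ω.1 v w ∧ ω.2 w = true := by
  induction h with
  | refl => exact .inl ⟨v, .refl, rfl⟩
  | @tail y z _ hyz ih =>
    rcases ih with ⟨u, hu, rfl⟩ | hghost
    · cases z with
      | none => exact .inr ⟨u, hu, hyz⟩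
      | some w => exact .inl ⟨w, hu.tail hyz, rfl⟩
    · exact .inr hghost

theorem connG_ghost_iff {ω : GConfig E} {v : V} :
    connG E ω (some v) none ↔ ∃ w, conn E ω.1 v w ∧ ω.2 w = true := by
  refine ⟨fun h => ?_, fun ⟨w, hvw, hw⟩ => (connG_of_conn hvw).tail hw⟩
  rcases connG_some_cases h with ⟨u, -, hu⟩ | hghost
  · exact absurd hu (Option.some_ne_none u).symm
  · exact hghost

theorem connG_some_iff_of_not_connG_ghost {ω : GConfig E} {u v : V}
    (hv : ¬ connG E ω (some v) none) : connG E ω (some v) (some u) ↔ conn E ω.1 v u := by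
  refine ⟨fun h => ?_, connG_of_conn⟩
  rcases connG_some_cases h with ⟨w, hvw, hw⟩ | hghost
  · exact Option.some_injective _ hw ▸ hvw
  · exact absurd (connG_ghost_iff.2 hghost) hv

theorem edgeWeight_nonneg {J : Sym2 V → ℝ} (hJ : ∀ e ∈ E, 0 ≤ J e) (ω : Config E) :
    0 ≤ edgeWeight J E ω := by
  refine prod_nonneg fun e _ => ?_
  split_ifs
  · simpa using hJ e e.2
  · exact (Real.exp_pos _).le

end Graph

variable {V : Type*} [Fintype V] [DecidableEq V] {E : Finset (Sym2 V)}

noncomputable def compatibleSpins (E : Finset (Sym2 V)) (ω : Config E) : Finset (V → Bool) :=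
  {σ | ∀ u v, conn E ω u v → σ u = σ v}

theorem card_compatibleSpins_ge_eq_two_pow (ω : Config E) (τ : V → Bool) :
    #{σ ∈ compatibleSpins E ω | τ ≤ σ}
      = 2 ^ #((univ.filter fun v => ∀ u, conn E ω u v → τ u = false).image (cluster E ω)) := by
  simp only [compatibleSpins, filter_filter, ← cluster_eq_cluster_iff]
  exact card_fiberwiseConst_ge_eq_two_pow (cluster E ω) τ

theorem kGhost_eq (ω : Config E) (τ : V → Bool) :
    kGhost E (ω, τ)
      = #((univ.filter fun v => ∀ u, conn E ω u v → τ u = false).image (cluster E ω)) := by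
  have hfree (v : V) : ¬ connG E (ω, τ) (some v) none ↔ ∀ u, conn E ω u v → τ u = false := by
    simp [connG_ghost_iff, conn_comm (u := v)]
  unfold kGhost
  simp only [hfree]
  congr 1
  refine image_congr fun v hv => ?_
  ext u
  simp only [mem_filter, mem_univ, true_and, cluster]
  exact connG_some_iff_of_not_connG_ghost ((hfree v).2 (mem_filter.1 hv).2)

theorem card_compatibleSpins_ge_eq_two_pow_kGhost (ω : Config E) (τ : V → Bool) :
    #{σ ∈ compatibleSpins E ω | τ ≤ σ} = 2 ^ kGhost E (ω, τ) := by
  rw [card_compatibleSpins_ge_eq_two_pow, kGhost_eq]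

theorem card_compatibleSpins (ω : Config E) : #(compatibleSpins E ω) = 2 ^ #(clusters E ω) := by
  simpa [kGhost_eq, clusters] using card_compatibleSpins_ge_eq_two_pow_kGhost ω ⊥

theorem mem_compatibleSpins_iff {ω : Config E} {σ : V → Bool} :
    σ ∈ compatibleSpins E ω ↔ ∀ e : E, ω e = true → ∀ u ∈ e.1, ∀ v ∈ e.1, σ u = σ v := by
  simp only [compatibleSpins, mem_filter, mem_univ, true_and]
  refine ⟨fun hσ e he u hu v hv => ?_, fun hσ u v huv => ?_⟩
  · rcases eq_or_ne u v with rfl | hne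
    · rfl
    obtain ⟨_, heE⟩ := e
    obtain rfl := (Sym2.mem_and_mem_iff hne).1 ⟨hu, hv⟩
    exact hσ u v (.single ⟨hne, heE, he⟩)
  · induction huv with
    | refl => rfl
    | @tail w x _ hwx ih =>
      obtain ⟨-, hwxE, hωwx⟩ := hwx
      exact ih.trans (hσ ⟨s(w, x), hwxE⟩ hωwx w (Sym2.mem_mk_left w x) x (Sym2.mem_mk_right w x))

theorem card_compatibleSpins_le_sum_exp (ω : Config E) (H : V → ℝ) :
    (#(compatibleSpins E ω) : ℝ) ≤ ∑ σ ∈ compatibleSpins E ω, Real.exp (∑ v, H v * spin (σ v)) := by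
  set x : (V → Bool) → ℝ := fun σ => ∑ v, H v * spin (σ v)
  have hflip : ∑ σ ∈ compatibleSpins E ω, Real.exp (x σ)
      = ∑ σ ∈ compatibleSpins E ω, Real.exp (-x σ) := by
    have hmem (σ : V → Bool) (hσ : σ ∈ compatibleSpins E ω) :
        (fun v => !σ v) ∈ compatibleSpins E ω := by
      simp only [compatibleSpins, mem_filter, mem_univ, true_and] at hσ ⊢
      exact fun u v huv => by rw [hσ u v huv]
    refine sum_nbij' (fun σ v => !σ v) (fun σ v => !σ v) hmem hmem
      (fun σ _ => by simp) (fun σ _ => by simp) fun σ _ => ?_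
    simp [x, spin_not, ← sum_neg_distrib]
  calc (#(compatibleSpins E ω) : ℝ)
      = ∑ σ ∈ compatibleSpins E ω, 1 := by simp
    _ ≤ ∑ σ ∈ compatibleSpins E ω, Real.cosh (x σ) :=
        sum_le_sum fun σ _ => Real.one_le_cosh _
    _ = ∑ σ ∈ compatibleSpins E ω, Real.exp (x σ) := by
        simp only [Real.cosh_eq, ← sum_div, sum_add_distrib, ← hflip]
        ring

/-- The Edwards–Sokal weight of `ω` with the spins summed out, up to the factor
`∏ e ∈ E, exp (J e)`. -/
noncomputable def couplingWeight (J : Sym2 V → ℝ) (H : V → ℝ) (E : Finset (Sym2 V))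
    (ω : Config E) : ℝ :=
  edgeWeight J E ω * ∑ σ ∈ compatibleSpins E ω, Real.exp (∑ v, H v * spin (σ v))

theorem sum_fkWeight_ghost (J : Sym2 V → ℝ) (H : V → ℝ) (ω : Config E) :
    ∑ τ, fkWeight J H E (ω, τ) = Real.exp (-∑ v, H v) * couplingWeight J H E ω := by
  set q : V → ℝ := fun v => Real.exp (-2 * H v)
  calc ∑ τ, fkWeight J H E (ω, τ)
      = ∑ τ, ∑ σ ∈ compatibleSpins E ω with τ ≤ σ,
          edgeWeight J E ω * ∏ v, (if τ v then 1 - q v else q v) := by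
        refine sum_congr rfl fun τ _ => ?_
        rw [sum_const, nsmul_eq_mul, card_compatibleSpins_ge_eq_two_pow_kGhost, fkWeight]
        push_cast
        ring
    _ = ∑ σ ∈ compatibleSpins E ω, ∑ τ with τ ≤ σ,
          edgeWeight J E ω * ∏ v, (if τ v then 1 - q v else q v) :=
        sum_comm' fun τ σ => by simp [and_comm]
    _ = edgeWeight J E ω * ∑ σ ∈ compatibleSpins E ω, ∏ v, if σ v then 1 else q v := by
        simp only [← mul_sum, sum_le_prod_ite]
    _ = Real.exp (-∑ v, H v) * couplingWeight J H E ω := by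
        simp only [couplingWeight, exp_sum_mul_spin, ← mul_sum, q]
        rw [Real.exp_neg]
        field_simp

theorem fkMarginal_eq (J : Sym2 V → ℝ) (H : V → ℝ) (ω : Config E) :
    fkMarginal J H E ω = couplingWeight J H E ω / ∑ ω', couplingWeight J H E ω' := by
  simp only [fkMarginal, fkProb, ← sum_div, Fintype.sum_prod_type, sum_fkWeight_ghost, ← mul_sum]
  exact mul_div_mul_left _ _ (Real.exp_pos _).ne'

theorem rcWeight_eq_couplingWeight_zero (J : Sym2 V → ℝ) (ω : Config E) :
    rcWeight J E ω = couplingWeight J (fun _ => 0) E ω := by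
  simp [rcWeight, couplingWeight, card_compatibleSpins, mul_comm]

theorem rcWeight_le_couplingWeight {J : Sym2 V → ℝ} (hJ : ∀ e ∈ E, 0 ≤ J e) (H : V → ℝ)
    (ω : Config E) : rcWeight J E ω ≤ couplingWeight J H E ω := by
  rw [rcWeight_eq_couplingWeight_zero, couplingWeight, couplingWeight]
  refine mul_le_mul_of_nonneg_left ?_ (edgeWeight_nonneg hJ ω)
  simpa using card_compatibleSpins_le_sum_exp ω H

theorem sum_rcWeight_pos {J : Sym2 V → ℝ} (hJ : ∀ e ∈ E, 0 ≤ J e) :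
    0 < ∑ ω, rcWeight J E ω := by
  refine sum_pos' (fun ω _ => mul_nonneg (by positivity) (edgeWeight_nonneg hJ ω))
    ⟨fun _ => false, mem_univ _, mul_pos (by positivity) (prod_pos fun e _ => ?_)⟩
  simpa using Real.exp_pos _

theorem exp_mul_pairSpin (J : ℝ) (σ : V → Bool) (e : Sym2 V) :
    Real.exp (J * pairSpin σ e)
      = Real.exp J * ((if ∀ u ∈ e, ∀ v ∈ e, σ u = σ v then 1 - Real.exp (-2 * J) else 0)
          + Real.exp (-2 * J)) := by
  induction e using Sym2.ind with
  | _ a b =>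
  have hconst : (∀ u ∈ s(a, b), ∀ v ∈ s(a, b), σ u = σ v) ↔ σ a = σ b := by
    simp only [Sym2.mem_iff, forall_eq_or_imp, forall_eq]
    exact ⟨fun h => h.1.2, fun h => ⟨⟨trivial, h⟩, h.symm, trivial⟩⟩
  simp only [pairSpin, Sym2.lift_mk]
  by_cases hab : σ a = σ b
  · rw [if_pos (hconst.2 hab), hab]
    cases σ b <;> simp [spin]
  · rw [if_neg (hconst.not.2 hab), zero_add, ← Real.exp_add]
    cases ha : σ a <;> cases hb : σ b <;> simp_all [spin] <;> ring_nf

theorem prod_exp_mul_pairSpin (J : Sym2 V → ℝ) (σ : V → Bool) :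
    ∏ e : E, Real.exp (J e * pairSpin σ e)
      = (∏ e : E, Real.exp (J e)) * ∑ ω : Config E with σ ∈ compatibleSpins E ω, edgeWeight J E ω := by
  set bond : E → Bool → ℝ := fun e b =>
    if b then (if ∀ u ∈ e.1, ∀ v ∈ e.1, σ u = σ v then 1 - Real.exp (-2 * J e) else 0)
    else Real.exp (-2 * J e)
  have hbonds (ω : Config E) :
      ∏ e, bond e (ω e) = if σ ∈ compatibleSpins E ω then edgeWeight J E ω else 0 := by
    split_ifs with hσ
    · refine prod_congr rfl fun e _ => ?_
      cases hωe : ω e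
      · rfl
      · exact if_pos (mem_compatibleSpins_iff.1 hσ e hωe)
    · obtain ⟨e, hωe, hfree⟩ : ∃ e : E, ω e = true ∧ ¬ ∀ u ∈ e.1, ∀ v ∈ e.1, σ u = σ v := by
        simpa [mem_compatibleSpins_iff] using hσ
      exact prod_eq_zero (mem_univ e) (by simp [bond, hωe, hfree])
  calc ∏ e : E, Real.exp (J e * pairSpin σ e)
      = ∏ e : E, Real.exp (J e) * ∑ b, bond e b := by
        refine prod_congr rfl fun e _ => ?_
        rw [exp_mul_pairSpin, Fintype.sum_bool]
        rfl
    _ = (∏ e : E, Real.exp (J e)) * ∑ ω : Config E, ∏ e, bond e (ω e) := by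
        rw [prod_mul_distrib, Fintype.prod_sum]
    _ = _ := by simp only [hbonds, sum_ite, sum_const_zero, add_zero]

theorem sum_isingWeight_eq (J : Sym2 V → ℝ) (H : V → ℝ) :
    ∑ σ, isingWeight J H E σ = (∏ e : E, Real.exp (J e)) * ∑ ω, couplingWeight J H E ω := by
  have hsplit (σ : V → Bool) : isingWeight J H E σ
      = (∏ e : E, Real.exp (J e * pairSpin σ e)) * Real.exp (∑ v, H v * spin (σ v)) := by
    rw [isingWeight, Real.exp_add, ← sum_coe_sort E, Real.exp_sum]
  simp only [hsplit, prod_exp_mul_pairSpin, couplingWeight, mul_sum, sum_mul, mul_assoc]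
  exact sum_comm' fun σ ω => by simp

theorem sum_isingProb_zero_mul_exp (J : Sym2 V → ℝ) (H : V → ℝ) :
    ∑ σ, isingProb J (fun _ => 0) E σ * Real.exp (∑ v, H v * spin (σ v))
      = (∑ ω, couplingWeight J H E ω) / ∑ ω, rcWeight J E ω := by
  have htilt (σ : V → Bool) : isingWeight J (fun _ => 0) E σ * Real.exp (∑ v, H v * spin (σ v))
      = isingWeight J H E σ := by
    simp [isingWeight, ← Real.exp_add]
  simp only [isingProb, div_mul_eq_mul_div, htilt, ← sum_div, sum_isingWeight_eq,
    rcWeight_eq_couplingWeight_zero]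
  exact mul_div_mul_left _ _ (prod_pos fun e _ => Real.exp_pos _).ne'

end FK

theorem fk_lower_bound_with_field_general
    {V : Type*} [Fintype V] [DecidableEq V]
    (E : Finset (Sym2 V))
    (J : Sym2 V → ℝ) (hJ : ∀ e ∈ E, 0 ≤ J e)
    (h : ℝ) (A : Finset (FK.Config E)) :
    (∑ ωi ∈ A, FK.fkMarginal J (fun _ => h) E ωi)
      ≥ (∑ ωi ∈ A, FK.rcProb J E ωi)
        / ∑ σ : V → Bool, FK.isingProb J (fun _ => 0) E σ *
            Real.exp (h * ∑ v, FK.spin (σ v)) := by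
  open FK Finset in
  have hle (ω : Config E) := rcWeight_le_couplingWeight hJ (fun _ => h) ω
  have hZ₀ : 0 < ∑ ω, rcWeight J E ω := sum_rcWeight_pos hJ
  have hD := sum_isingProb_zero_mul_exp J (fun _ => h) (E := E)
  simp only [← mul_sum] at hD
  simp only [fkMarginal_eq, rcProb, ← sum_div, hD, div_div_div_cancel_right₀ hZ₀.ne', ge_iff_le]
  exact div_le_div_of_nonneg_right (sum_le_sum fun ω _ => hle ω)
    (hZ₀.le.trans (sum_le_sum fun ω _ => hle ω))

/-- lower bound for FK probabilities under a magnetic field. -/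
theorem fk_lower_bound_with_field
    {V : Type*} [Fintype V] [DecidableEq V]
    (E : Finset (Sym2 V)) (hE : ∀ e ∈ E, ¬ e.IsDiag)
    (J : Sym2 V → ℝ) (hJ : ∀ e ∈ E, 0 ≤ J e)
    (h : ℝ) (hh : 0 ≤ h) (A : Finset (FK.Config E)) :
    (∑ ωi ∈ A, FK.fkMarginal J (fun _ => h) E ωi)
      ≥ (∑ ωi ∈ A, FK.rcProb J E ωi)
        / ∑ σ : V → Bool, FK.isingProb J (fun _ => 0) E σ *
            Real.exp (h * ∑ v, FK.spin (σ v)) :=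
  fk_lower_bound_with_field_general E J hJ h A
end

section
/- Conditional ghost-connection probability for general cluster weight q > 0 (finite-graph version of the Remark at the end of the Appendix): for every ω̃ ∈ {0,1}^E and every cluster C of ω̃, under P̂^q_{J,H} conditioned on {ω|_E = ω̃} one has P̂^q_{J,H}( C ↔ g | ω|_E = ω̃ ) = tanh(H(C)) / ( 1 + (q−2)/(e^{2 H(C)} + 1) ). -/
open scoped Classical

namespace FK

variable {V : Type*} [Fintype V] [DecidableEq V]

/-- Unnormalized random-cluster weight with ghost, general cluster weight `q`. -/
noncomputable def fkWeightQ (q : ℝ) (J : Sym2 V → ℝ) (H : V → ℝ) (E : Finset (Sym2 V))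
    (ω : GConfig E) : ℝ :=
  q ^ kGhost E ω * edgeWeight J E ω.1 *
    ∏ v, if ω.2 v then 1 - Real.exp (-2 * H v) else Real.exp (-2 * H v)

/-- The random-cluster measure with ghost, general cluster weight `q`. -/
noncomputable def fkProbQ (q : ℝ) (J : Sym2 V → ℝ) (H : V → ℝ) (E : Finset (Sym2 V))
    (ω : GConfig E) : ℝ :=
  fkWeightQ q J H E ω / ∑ ω' : GConfig E, fkWeightQ q J H E ω'

/-- The marginal on internal edges of the random-cluster measure with ghost,
general cluster weight `q`. -/
noncomputable def fkMarginalQ (q : ℝ) (J : Sym2 V → ℝ) (H : V → ℝ) (E : Finset (Sym2 V))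
    (ωi : Config E) : ℝ :=
  ∑ ωg : V → Bool, fkProbQ q J H E (ωi, ωg)

/-- Unnormalized zero-field random-cluster weight, general cluster weight `q`. -/
noncomputable def rcWeightQ (q : ℝ) (J : Sym2 V → ℝ) (E : Finset (Sym2 V))
    (ω : Config E) : ℝ :=
  q ^ (clusters E ω).card * edgeWeight J E ω

/-- The zero-field random-cluster measure, general cluster weight `q`. -/
noncomputable def rcProbQ (q : ℝ) (J : Sym2 V → ℝ) (E : Finset (Sym2 V))
    (ω : Config E) : ℝ :=
  rcWeightQ q J E ω / ∑ ω' : Config E, rcWeightQ q J E ω'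

end FK

/-!
Given the internal configuration, a vertex reaches the ghost iff some vertex of its cluster has
an open ghost edge, and `kGhost` counts the clusters all of whose ghost edges are closed. Hence
the conditional weight of the ghost edges factorizes over the clusters: on `C` it is the
product of independent bonds of weights `1 - e^{-2 H_v}` and `e^{-2 H_v}`, tilted by a factor `q`
on the configuration with all of them closed. So `C ↔ g` has conditional probability
`(1 - e^{-2 H(C)}) / (1 + (q - 1) e^{-2 H(C)})`.
-/

section RestrictedSums

variable {β R : Type*} [Fintype β]

lemma Finset.sum_restrict_mul_restrict {V : Type*} [Fintype V] [DecidableEq V]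
    [CommSemiring R] (s : Finset V) (f : (s → β) → R) (g : ({v // v ∉ s} → β) → R) :
    ∑ ω : V → β, f (fun v => ω v) * g (fun v => ω v) = (∑ a, f a) * ∑ b, g b := by
  rw [Finset.sum_mul_sum, ← Finset.sum_product', Finset.univ_product_univ]
  exact (Equiv.piEquivPiSubtypeProd (· ∈ s) fun _ => β).sum_comp fun x => f x.1 * g x.2

/-- Conditioning a product weight `c f g` on an event that only sees the coordinates in `s`. -/
lemma Finset.sum_ite_div_sum_restrict_mul_restrict {V : Type*} [Fintype V]
    [DecidableEq V] [Field R] (s : Finset V) (P : (s → β) → Prop) [DecidablePred P] (c : R)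
    (f : (s → β) → R) (g : ({v // v ∉ s} → β) → R)
    (hne : ∑ ω : V → β, c * (f (fun v => ω v) * g (fun v => ω v)) ≠ 0) :
    (∑ ω : V → β, if P (fun v => ω v) then c * (f (fun v => ω v) * g (fun v => ω v)) else 0) /
        ∑ ω : V → β, c * (f (fun v => ω v) * g (fun v => ω v)) =
      (∑ a, if P a then f a else 0) / ∑ a, f a := by
  have hnum : (∑ ω : V → β, if P (fun v => ω v) then
      c * (f (fun v => ω v) * g (fun v => ω v)) else 0) =
      c * ((∑ a, if P a then f a else 0) * ∑ b, g b) := by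
    rw [← s.sum_restrict_mul_restrict (fun a => if P a then f a else 0) g, Finset.mul_sum]
    refine Finset.sum_congr rfl fun ω _ => ?_
    split_ifs <;> simp
  rw [← Finset.mul_sum, s.sum_restrict_mul_restrict] at hne ⊢
  rw [hnum, mul_div_mul_left _ _ (left_ne_zero_of_mul hne),
    mul_div_mul_right _ _ (right_ne_zero_of_mul (right_ne_zero_of_mul hne))]

end RestrictedSums

lemma Real.tanh_eq_exp_two_mul (x : ℝ) :
    Real.tanh x = (Real.exp (2 * x) - 1) / (Real.exp (2 * x) + 1) := by
  rw [Real.tanh_eq, ← mul_div_mul_left _ _ (Real.exp_pos x).ne', mul_sub, mul_add,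
    ← Real.exp_add, ← Real.exp_add, add_neg_cancel, Real.exp_zero, ← two_mul]

lemma Real.one_sub_exp_div_eq_tanh_div (x q : ℝ) :
    (1 - Real.exp (-2 * x)) / (1 + (q - 1) * Real.exp (-2 * x)) =
      Real.tanh x / (1 + (q - 2) / (Real.exp (2 * x) + 1)) := by
  have hexp : Real.exp (2 * x) * Real.exp (-2 * x) = 1 := by
    rw [← Real.exp_add]; simp
  have hpos : 0 < Real.exp (2 * x) + 1 := by positivity
  rw [Real.tanh_eq_exp_two_mul, one_add_div hpos.ne', div_div_div_cancel_right₀ hpos.ne',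
    ← mul_div_mul_left _ _ (Real.exp_pos (2 * x)).ne']
  congr 1
  · linear_combination -hexp
  · linear_combination (q - 1) * hexp

namespace FK

section Clusters

variable {V : Type*} {E : Finset (Sym2 V)}

lemma adj_symm {ω : Config E} {u v : V} (h : adj E ω u v) : adj E ω v u := by
  obtain ⟨hne, he, hω⟩ := h
  rw [adj, Sym2.eq_swap]
  exact ⟨hne.symm, he, hω⟩

lemma conn_symm {ω : Config E} {u v : V} (h : conn E ω u v) : conn E ω v u :=
  letI : Std.Symm (adj E ω) := ⟨fun _ _ => adj_symm⟩
  Std.Symm.symm (r := Relation.ReflTransGen (adj E ω)) _ _ h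

lemma connG_some_of_conn {ωi : Config E} {ωg : V → Bool} {u v : V} (h : conn E ωi u v) :
    connG E (ωi, ωg) (some u) (some v) :=
  Relation.ReflTransGen.lift some (fun _ _ huv => huv) _ _ h

lemma connG_some_none_iff {ωi : Config E} {ωg : V → Bool} {v : V} :
    connG E (ωi, ωg) (some v) none ↔ ∃ u, conn E ωi v u ∧ ωg u = true := by
  constructor
  · suffices ∀ x, connG E (ωi, ωg) x none → ∀ u, x = some u → ∃ w, conn E ωi u w ∧ ωg w = true
      from fun h => this _ h v rfl
    intro x hx
    induction hx using Relation.ReflTransGen.head_induction_on with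
    | refl => exact fun _ h => nomatch h
    | @head x y hxy _ ih =>
      rintro u rfl
      match y, hxy, ih with
      | none, hxy, _ => exact ⟨u, .refl, hxy⟩
      | some w, hxy, ih =>
        obtain ⟨w', hww', hw'⟩ := ih w rfl
        exact ⟨w', hww'.head hxy, hw'⟩
  · rintro ⟨u, hvu, hu⟩
    exact (connG_some_of_conn hvu).tail hu

lemma connG_none_or_conn {ωi : Config E} {ωg : V → Bool} {v : V} {y : Option V}
    (h : connG E (ωi, ωg) (some v) y) :
    connG E (ωi, ωg) (some v) none ∨ ∃ w, y = some w ∧ conn E ωi v w := by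
  induction h with
  | refl => exact .inr ⟨v, rfl, .refl⟩
  | @tail y z _ hyz ih =>
    rcases ih with hg | ⟨w, rfl, hvw⟩
    · exact .inl hg
    · match z, hyz with
      | none, hyz => exact .inl ((connG_some_of_conn hvw).tail hyz)
      | some w', hyz => exact .inr ⟨w', rfl, hvw.tail hyz⟩

variable [Fintype V]

lemma mem_cluster {ω : Config E} {u v : V} : u ∈ cluster E ω v ↔ conn E ω v u := by
  simp [cluster]

lemma cluster_eq_of_mem {ω : Config E} {u v : V} (h : u ∈ cluster E ω v) :
    cluster E ω u = cluster E ω v := by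
  ext w
  simp only [mem_cluster]
  exact ⟨(mem_cluster.mp h).trans, (conn_symm (mem_cluster.mp h)).trans⟩

lemma connG_some_none_iff_exists_mem_cluster {ωi : Config E} {ωg : V → Bool} {v : V} :
    connG E (ωi, ωg) (some v) none ↔ ∃ u ∈ cluster E ωi v, ωg u = true := by
  simp only [connG_some_none_iff, mem_cluster]

variable [DecidableEq V]

lemma cluster_eq_of_mem_clusters {ω : Config E} {C : Finset V} (hC : C ∈ clusters E ω)
    {v : V} (hv : v ∈ C) : cluster E ω v = C := by
  obtain ⟨w, -, rfl⟩ := Finset.mem_image.mp hC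
  exact cluster_eq_of_mem hv

lemma exists_connG_none_iff {ωi : Config E} {ωg : V → Bool} {C : Finset V}
    (hC : C ∈ clusters E ωi) :
    (∃ v ∈ C, connG E (ωi, ωg) (some v) none) ↔ ∃ u ∈ C, ωg u = true := by
  constructor
  · rintro ⟨v, hv, hvg⟩
    rw [connG_some_none_iff_exists_mem_cluster, cluster_eq_of_mem_clusters hC hv] at hvg
    exact hvg
  · rintro ⟨u, hu, hug⟩
    exact ⟨u, hu, connG_some_none_iff.mpr ⟨u, .refl, hug⟩⟩

lemma kGhost_eq_card_filter (ωi : Config E) (ωg : V → Bool) :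
    kGhost E (ωi, ωg) = ((clusters E ωi).filter fun D => ∀ u ∈ D, ωg u = false).card := by
  have hcomp : ∀ v, ¬ connG E (ωi, ωg) (some v) none →
      Finset.univ.filter (fun u => connG E (ωi, ωg) (some v) (some u)) = cluster E ωi v := by
    intro v hv
    ext u
    simp only [Finset.mem_filter, Finset.mem_univ, true_and, mem_cluster]
    refine ⟨fun h => ?_, connG_some_of_conn⟩
    obtain ⟨w, hw, hvw⟩ := (connG_none_or_conn h).resolve_left hv
    exact Option.some_injective _ hw ▸ hvw
  have hclosed : ∀ v, ¬ connG E (ωi, ωg) (some v) none ↔ ∀ u ∈ cluster E ωi v, ωg u = false := by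
    simp [connG_some_none_iff_exists_mem_cluster]
  unfold kGhost clusters
  congr 1
  ext D
  simp only [Finset.mem_image, Finset.mem_filter, Finset.mem_univ, true_and]
  constructor
  · rintro ⟨v, hv, rfl⟩
    exact ⟨⟨v, (hcomp v hv).symm⟩, hcomp v hv ▸ (hclosed v).mp hv⟩
  · rintro ⟨⟨v, rfl⟩, hD⟩
    exact ⟨v, (hclosed v).mpr hD, hcomp v ((hclosed v).mpr hD)⟩

lemma pow_kGhost_eq_prod (q : ℝ) (ωi : Config E) (ωg : V → Bool) :
    q ^ kGhost E (ωi, ωg) =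
      ∏ D ∈ clusters E ωi, if ∀ u ∈ D, ωg u = false then q else 1 := by
  rw [kGhost_eq_card_filter, Finset.prod_ite, Finset.prod_const, Finset.prod_const_one, mul_one]

end Clusters

/-- The factor of a bond of coupling `x` in state `b` in `edgeWeight` and `fkWeightQ`. -/
noncomputable def bondWeight (x : ℝ) (b : Bool) : ℝ :=
  if b then 1 - Real.exp (-2 * x) else Real.exp (-2 * x)

lemma sum_prod_bondWeight {ι : Type*} [Fintype ι] [DecidableEq ι] (h : ι → ℝ) :
    ∑ a : ι → Bool, ∏ i, bondWeight (h i) (a i) = 1 := by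
  rw [← Fintype.prod_sum fun i b => bondWeight (h i) b]
  exact Finset.prod_eq_one fun i _ => by simp [bondWeight]

lemma prod_bondWeight_false {ι : Type*} [Fintype ι] (h : ι → ℝ) :
    ∏ i, bondWeight (h i) false = Real.exp (-2 * ∑ i, h i) := by
  simp [bondWeight, ← Real.exp_sum, Finset.mul_sum]

/-- The ghost-edge weight of a cluster: independent bonds, with the extra factor `q` of the
cluster counted by `kGhost` when none of its ghost edges is open. -/
noncomputable def clusterWeight {ι : Type*} [Fintype ι] (q : ℝ) (h : ι → ℝ) (a : ι → Bool) : ℝ :=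
  (if a = fun _ => false then q else 1) * ∏ i, bondWeight (h i) (a i)

section ClusterWeight

variable {ι : Type*} [Fintype ι] [DecidableEq ι] (q : ℝ) (h : ι → ℝ)

lemma sum_clusterWeight :
    ∑ a, clusterWeight q h a = 1 + (q - 1) * Real.exp (-2 * ∑ i, h i) := by
  have hsplit : ∀ a : ι → Bool, clusterWeight q h a = ∏ i, bondWeight (h i) (a i) +
      if a = (fun _ => false) then (q - 1) * ∏ i, bondWeight (h i) (a i) else 0 := by
    intro a
    unfold clusterWeight
    split_ifs <;> ring
  simp only [hsplit, Finset.sum_add_distrib, sum_prod_bondWeight, Finset.sum_ite_eq',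
    Finset.mem_univ, if_true, prod_bondWeight_false]

lemma sum_ite_exists_clusterWeight :
    ∑ a, (if ∃ i, a i = true then clusterWeight q h a else 0) =
      1 - Real.exp (-2 * ∑ i, h i) := by
  have hsplit : ∀ a : ι → Bool, (if ∃ i, a i = true then clusterWeight q h a else 0) =
      ∏ i, bondWeight (h i) (a i) -
        if a = (fun _ => false) then ∏ i, bondWeight (h i) (a i) else 0 := by
    intro a
    have hex : (∃ i, a i = true) ↔ a ≠ fun _ => false := by
      simp [funext_iff]
    by_cases ha : a = fun _ => false
    · simp [ha]
    · simp [hex.mpr ha, ha, clusterWeight]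
  simp only [hsplit, Finset.sum_sub_distrib, sum_prod_bondWeight, Finset.sum_ite_eq',
    Finset.mem_univ, if_true, prod_bondWeight_false]

end ClusterWeight

lemma exists_pow_kGhost_mul_prod_eq_clusterWeight_mul {V : Type*} [Fintype V] [DecidableEq V]
    {E : Finset (Sym2 V)} {ωi : Config E} {C : Finset V} (hC : C ∈ clusters E ωi)
    (q : ℝ) (H : V → ℝ) :
    ∃ g : ({v // v ∉ C} → Bool) → ℝ, ∀ ωg : V → Bool,
      q ^ kGhost E (ωi, ωg) * ∏ v, bondWeight (H v) (ωg v) =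
        clusterWeight q (fun v : {v // v ∈ C} => H v) (fun v => ωg v) * g (fun v => ωg v) := by
  refine ⟨fun b => (∏ D ∈ (clusters E ωi).erase C,
      if ∀ u : {v // v ∉ C}, u.1 ∈ D → b u = false then q else 1) *
    ∏ u, bondWeight (H u.1) (b u), fun ωg => ?_⟩
  have hC_closed : (∀ u ∈ C, ωg u = false) ↔ (fun v : {v // v ∈ C} => ωg v) = fun _ => false := by
    simp [funext_iff]
  have hD_closed : ∀ D ∈ (clusters E ωi).erase C, (∀ u ∈ D, ωg u = false) ↔
      ∀ u : {v // v ∉ C}, u.1 ∈ D → ωg u = false := by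
    intro D hD
    obtain ⟨hDC, hD⟩ := Finset.mem_erase.mp hD
    have hdisj : ∀ u ∈ D, u ∉ C := fun u huD huC =>
      hDC ((cluster_eq_of_mem_clusters hD huD).symm.trans (cluster_eq_of_mem_clusters hC huC))
    exact ⟨fun h u hu => h u.1 hu, fun h u hu => h ⟨u, hdisj u hu⟩ hu⟩
  rw [pow_kGhost_eq_prod, ← Finset.mul_prod_erase _ _ hC, Finset.prod_congr rfl fun D hD =>
      if_congr (hD_closed D hD) rfl rfl, ← Finset.prod_mul_prod_compl C, ← Finset.prod_coe_sort C,
    Finset.prod_subtype Cᶜ (p := (· ∉ C)) (fun _ => Finset.mem_compl), clusterWeight]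
  simp only [hC_closed]
  ring

end FK

theorem fk_ghost_connection_conditional_general_q_general
    {V : Type*} [Fintype V] [DecidableEq V]
    (E : Finset (Sym2 V))
    (J : Sym2 V → ℝ)
    (H : V → ℝ)
    (q : ℝ)
    (ωi : FK.Config E) (hpos : 0 < FK.fkMarginalQ q J H E ωi)
    (C : Finset V) (hC : C ∈ FK.clusters E ωi) :
    (∑ ωg : V → Bool,
        if ∃ v ∈ C, FK.connG E (ωi, ωg) (some v) none
        then FK.fkProbQ q J H E (ωi, ωg) else 0)
      / FK.fkMarginalQ q J H E ωi
    = Real.tanh (∑ v ∈ C, H v) /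
        (1 + (q - 2) / (Real.exp (2 * ∑ v ∈ C, H v) + 1)) := by
  obtain ⟨g, hg⟩ := FK.exists_pow_kGhost_mul_prod_eq_clusterWeight_mul hC q H
  set c := FK.edgeWeight J E ωi / ∑ ω, FK.fkWeightQ q J H E ω
  have hprob : ∀ ωg, FK.fkProbQ q J H E (ωi, ωg) =
      c * (FK.clusterWeight q (fun v : {v // v ∈ C} => H v) (fun v => ωg v) *
        g (fun v => ωg v)) := by
    intro ωg
    rw [← hg, FK.fkProbQ, FK.fkWeightQ]
    simp only [FK.bondWeight, c]
    ring
  have hevent : ∀ ωg : V → Bool, (∃ v ∈ C, FK.connG E (ωi, ωg) (some v) none) ↔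
      ∃ v : {v // v ∈ C}, ωg v = true := by
    simp [FK.exists_connG_none_iff hC]
  have hmarg : FK.fkMarginalQ q J H E ωi = ∑ ωg : V → Bool,
      c * (FK.clusterWeight q (fun v : {v // v ∈ C} => H v) (fun v => ωg v) *
        g (fun v => ωg v)) :=
    Finset.sum_congr rfl fun ωg _ => hprob ωg
  simp only [hevent, hprob]
  rw [hmarg] at hpos ⊢
  rw [C.sum_ite_div_sum_restrict_mul_restrict (fun a => ∃ v, a v = true) c _ _ hpos.ne',
    FK.sum_ite_exists_clusterWeight, FK.sum_clusterWeight,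
    Finset.sum_coe_sort C H]
  exact Real.one_sub_exp_div_eq_tanh_div _ _

/-- conditional ghost-connection probability for general
cluster weight `q > 0`. -/
theorem fk_ghost_connection_conditional_general_q
    {V : Type*} [Fintype V] [DecidableEq V]
    (E : Finset (Sym2 V)) (hE : ∀ e ∈ E, ¬ e.IsDiag)
    (J : Sym2 V → ℝ) (hJ : ∀ e ∈ E, 0 ≤ J e)
    (H : V → ℝ) (hH : ∀ v, 0 ≤ H v)
    (q : ℝ) (hq : 0 < q)
    (ωi : FK.Config E) (hpos : 0 < FK.fkMarginalQ q J H E ωi)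
    (C : Finset V) (hC : C ∈ FK.clusters E ωi) :
    (∑ ωg : V → Bool,
        if ∃ v ∈ C, FK.connG E (ωi, ωg) (some v) none
        then FK.fkProbQ q J H E (ωi, ωg) else 0)
      / FK.fkMarginalQ q J H E ωi
    = Real.tanh (∑ v ∈ C, H v) /
        (1 + (q - 2) / (Real.exp (2 * ∑ v ∈ C, H v) + 1)) :=
  fk_ghost_connection_conditional_general_q_general E J H q ωi hpos C hC
end
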